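/- With γ ∈ (0,1), reward r_t = p_t - p_{t-1}, and value V(s_t) = 1 - p_{t-1}, the truncated GAE satisfies Â_t = (γ - 1)·Σ_{l=0}^{N} (γλ)^l·(1 - p_{t+l}); in particular, if p is bounded above away from 1 (p_s ≤ 1 - c with c > 0 for all s), then Â_t ≤ (γ - 1)·c < 0. -/
import Mathlib


/-- with γ ∈ (0,1), the truncated GAE equals
(γ-1)·Σ (γλ)^l (1 - p_{t+l}); if p s ≤ 1 - c with c > 0 then Â t ≤ (γ-1)·c < 0. -/
theorem gae_negative_bound (p : ℕ → ℝ) (c : ℝ) (hc : 0 < c)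
    (hp : ∀ s, p s ≤ 1 - c)
    (γ lam : ℝ) (hγ : 0 < γ) (hγ1 : γ < 1) (hlam : lam ∈ Set.Icc (0:ℝ) 1) :
    ∀ (t N : ℕ),
      (∑ l ∈ Finset.range (N + 1), (γ * lam) ^ l *
          ((p (t + l) - p (t + l - 1)) + γ * (1 - p (t + l)) - (1 - p (t + l - 1)))
        = (γ - 1) * ∑ l ∈ Finset.range (N + 1), (γ * lam) ^ l * (1 - p (t + l))) ∧
      (∑ l ∈ Finset.range (N + 1), (γ * lam) ^ l *
          ((p (t + l) - p (t + l - 1)) + γ * (1 - p (t + l)) - (1 - p (t + l - 1)))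
        ≤ (γ - 1) * c) ∧
      (γ - 1) * c < 0 := by
  intro t N
  obtain ⟨hl0, hl1⟩ := hlam
  have hgl : 0 ≤ γ * lam := mul_nonneg hγ.le hl0
  have heq : ∑ l ∈ Finset.range (N + 1), (γ * lam) ^ l *
          ((p (t + l) - p (t + l - 1)) + γ * (1 - p (t + l)) - (1 - p (t + l - 1)))
        = (γ - 1) * ∑ l ∈ Finset.range (N + 1), (γ * lam) ^ l * (1 - p (t + l)) := by
    rw [Finset.mul_sum]
    apply Finset.sum_congr rfl
    intro l _
    ring
  refine ⟨heq, ?_, ?_⟩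
  · rw [heq]
    have hsum : c ≤ ∑ l ∈ Finset.range (N + 1), (γ * lam) ^ l * (1 - p (t + l)) := by
      have h0 : c ≤ (γ * lam) ^ 0 * (1 - p (t + 0)) := by
        simp only [pow_zero, one_mul]
        linarith [hp (t + 0)]
      calc c ≤ (γ * lam) ^ 0 * (1 - p (t + 0)) := h0
        _ ≤ _ := Finset.single_le_sum (f := fun l => (γ * lam) ^ l * (1 - p (t + l)))
            (fun i _ => mul_nonneg (pow_nonneg hgl i) (by linarith [hp (t + i)]))
            (Finset.mem_range.mpr (Nat.succ_pos N))
    have : γ - 1 < 0 := by linarith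
    nlinarith
  · nlinarith
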